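/- Let μ be a (C,α)-Ahlfors regular measure on ℝ, R ≥ 2 an integer with R^α ≥ 21C², and J ⊂ ℝ a closed interval with μ(J) ≥ (3C)⁻¹|J|^α, short enough for the Ahlfors regularity bounds to apply (3|J| ≤ ρ₀). Partition J into R closed subintervals of equal length |J|/R. Then at least (4C)⁻²R^α of these subintervals I satisfy μ(I) ≥ (3C)⁻¹|I|^α. -/

import Mathlib

/-! The `R` pieces cover `J`, and a piece of positive measure meets the support, so it lies in a
ball of radius `δ = |J|/R` of measure `≤ C δ^α`; comparing with `μ J ≥ (3C)⁻¹ |J|^α` shows that at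
least `R^α / (3C²)` pieces have positive measure. For each such piece other than the two extreme
ones, the ball of radius `δ` around a support point in it lies in the piece and its two neighbours
and has measure `≥ C⁻¹ δ^α`, so one of these three pieces `I` is heavy: `μ I ≥ (3C)⁻¹ δ^α`. A heavy
piece is thus counted at most three times, and `R^α ≥ 21C²` absorbs the two extreme pieces. -/

open MeasureTheory Metric

/-- The (topological) support of a measure. -/
def msupp {X : Type*} [MetricSpace X] [MeasurableSpace X] (μ : Measure X) : Set X :=
  {x | ∀ r : ℝ, 0 < r → 0 < μ (ball x r)}

open Finset ENNReal

theorem msupp_eq_support {X : Type*} [MetricSpace X] [MeasurableSpace X] (μ : Measure X) :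
    msupp μ = μ.support := by
  ext x
  rw [Measure.mem_support_iff_forall,
    nhds_basis_ball.forall_iff fun _ _ hst h => h.trans_le (measure_mono hst)]
  rfl

def IsAhlforsRegular {X : Type*} [MetricSpace X] [MeasurableSpace X] (μ : Measure X)
    (C α ρ₀ : ℝ) : Prop :=
  ∀ x ∈ msupp μ, ∀ ρ : ℝ, 0 < ρ → ρ ≤ ρ₀ →
    ENNReal.ofReal (C⁻¹ * ρ ^ α) ≤ μ (closedBall x ρ) ∧
      μ (closedBall x ρ) ≤ ENNReal.ofReal (C * ρ ^ α)

theorem ENNReal.le_or_le_or_le_of_three_mul_le {c x y z : ℝ≥0∞} (h : 3 * c ≤ x + y + z) :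
    c ≤ x ∨ c ≤ y ∨ c ≤ z := by
  by_contra! hlt
  obtain ⟨hx, hy, hz⟩ := hlt
  have : x + y + z < c + c + c := ENNReal.add_lt_add (ENNReal.add_lt_add hx hy) hz
  exact (h.trans_lt this).ne (by ring)

theorem Finset.card_le_three_mul_card_add_two {T S : Finset ℕ} {R : ℕ} (hT : T ⊆ range R)
    (h : ∀ m, m + 1 ∈ T → m + 2 < R → ∃ k ∈ S, k ∈ Icc m (m + 2)) :
    #T ≤ 3 * #S + 2 := by
  have hcover : T ⊆ {0, R - 1} ∪ S.biUnion fun k => Icc (k - 1) (k + 1) := by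
    intro m hm
    have hmR := mem_range.1 (hT hm)
    rcases Nat.eq_zero_or_pos m with rfl | hm0
    · simp
    by_cases hlast : m = R - 1
    · simp [hlast]
    obtain ⟨k, hkS, hk⟩ := h (m - 1) (by rwa [Nat.sub_add_cancel (by omega)]) (by omega)
    refine mem_union_right _ (mem_biUnion.2 ⟨k, hkS, ?_⟩)
    simp only [mem_Icc] at hk ⊢
    omega
  calc #T ≤ #({0, R - 1} : Finset ℕ) + #(S.biUnion fun k => Icc (k - 1) (k + 1)) :=
        (card_le_card hcover).trans (card_union_le _ _)
    _ ≤ 2 + #S * 3 := by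
        gcongr
        · exact card_le_two
        · exact card_biUnion_le_card_mul _ _ _ fun k _ => by simp only [Nat.card_Icc]; omega
    _ = 3 * #S + 2 := by ring

section Partition

def partitionPiece (a δ : ℝ) (m : ℕ) : Set ℝ :=
  Set.Icc (a + m * δ) (a + (m + 1) * δ)

variable {a δ : ℝ}

theorem Icc_subset_biUnion_partitionPiece (hδ : 0 ≤ δ) {R : ℕ} (hR : R ≠ 0) :
    Set.Icc a (a + R * δ) ⊆ ⋃ m ∈ range R, partitionPiece a δ m := by
  induction R with
  | zero => exact absurd rfl hR
  | succ n ih =>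
    rcases eq_or_ne n 0 with rfl | hn
    · simp [partitionPiece]
    rw [range_add_one, set_biUnion_insert, Nat.cast_succ, Set.union_comm,
      ← Set.Icc_union_Icc_eq_Icc (b := a + n * δ) (le_add_of_nonneg_right (by positivity))
        (by linarith)]
    exact Set.union_subset_union_left _ (ih hn)

theorem partitionPiece_subset_closedBall {x : ℝ} {m : ℕ} (hx : x ∈ partitionPiece a δ m) :
    partitionPiece a δ m ⊆ closedBall x δ := by
  intro y hy
  simp only [partitionPiece, Set.mem_Icc] at hx hy
  rw [Real.closedBall_eq_Icc]
  constructor <;> linarith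

theorem closedBall_subset_partitionPiece_union {x : ℝ} {m : ℕ}
    (hx : x ∈ partitionPiece a δ (m + 1)) :
    closedBall x δ ⊆
      partitionPiece a δ m ∪ partitionPiece a δ (m + 1) ∪ partitionPiece a δ (m + 2) := by
  intro y hy
  simp only [partitionPiece, Set.mem_Icc, Set.mem_union, Nat.cast_add, Nat.cast_one,
    Nat.cast_ofNat] at hx ⊢
  rw [Real.closedBall_eq_Icc, Set.mem_Icc] at hy
  by_cases h₁ : y ≤ a + (m + 1) * δ
  · left; left; constructor <;> linarith
  by_cases h₂ : y ≤ a + (m + 1 + 1) * δ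
  · left; right; constructor <;> linarith
  · right; constructor <;> linarith

end Partition

section Ahlfors

variable {μ : Measure ℝ} {C α ρ₀ a δ : ℝ}

theorem IsAhlforsRegular.measure_partitionPiece_le (hμ : IsAhlforsRegular μ C α ρ₀)
    (hδ : 0 < δ) (hδρ : δ ≤ ρ₀) {m : ℕ} (hm : μ (partitionPiece a δ m) ≠ 0) :
    μ (partitionPiece a δ m) ≤ ENNReal.ofReal (C * δ ^ α) := by
  obtain ⟨x, hxI, hx⟩ := Measure.nonempty_inter_support_of_pos (pos_iff_ne_zero.2 hm)
  rw [← msupp_eq_support] at hx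
  exact (measure_mono (partitionPiece_subset_closedBall hxI)).trans (hμ x hx δ hδ hδρ).2

theorem IsAhlforsRegular.exists_heavy_partitionPiece (hμ : IsAhlforsRegular μ C α ρ₀)
    (hC : 0 < C) (hδ : 0 < δ) (hδρ : δ ≤ ρ₀) {m : ℕ} (hm : μ (partitionPiece a δ (m + 1)) ≠ 0) :
    ∃ k ∈ Icc m (m + 2),
      ENNReal.ofReal ((3 * C)⁻¹ * δ ^ α) ≤ μ (partitionPiece a δ k) := by
  obtain ⟨x, hxI, hx⟩ := Measure.nonempty_inter_support_of_pos (pos_iff_ne_zero.2 hm)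
  rw [← msupp_eq_support] at hx
  have hthird : 3 * ENNReal.ofReal ((3 * C)⁻¹ * δ ^ α) = ENNReal.ofReal (C⁻¹ * δ ^ α) := by
    rw [← ENNReal.ofReal_ofNat 3, ← ENNReal.ofReal_mul (by norm_num)]
    congr 1
    field_simp
  have hthree : 3 * ENNReal.ofReal ((3 * C)⁻¹ * δ ^ α) ≤
      μ (partitionPiece a δ m) + μ (partitionPiece a δ (m + 1)) +
        μ (partitionPiece a δ (m + 2)) :=
    calc _ = ENNReal.ofReal (C⁻¹ * δ ^ α) := hthird
      _ ≤ μ (closedBall x δ) := (hμ x hx δ hδ hδρ).1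
      _ ≤ _ := (measure_mono (closedBall_subset_partitionPiece_union hxI)).trans <|
          (measure_union_le _ _).trans (add_le_add_left (measure_union_le _ _) _)
  rcases ENNReal.le_or_le_or_le_of_three_mul_le hthree with h | h | h
  · exact ⟨m, by simp, h⟩
  · exact ⟨m + 1, by simp, h⟩
  · exact ⟨m + 2, by simp, h⟩

theorem IsAhlforsRegular.rpow_le_card_partitionPiece_ne_zero (hμ : IsAhlforsRegular μ C α ρ₀)
    (hC : 0 < C) (hδ : 0 < δ) (hδρ : δ ≤ ρ₀) {R : ℕ} (hR : R ≠ 0)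
    (hJ : ENNReal.ofReal ((3 * C)⁻¹ * (R * δ) ^ α) ≤ μ (Set.Icc a (a + R * δ))) :
    (R : ℝ) ^ α ≤ 3 * C ^ 2 * #{m ∈ range R | μ (partitionPiece a δ m) ≠ 0} := by
  set T := {m ∈ range R | μ (partitionPiece a δ m) ≠ 0}
  have hδα : 0 < δ ^ α := Real.rpow_pos_of_pos hδ α
  have hsum : ENNReal.ofReal ((3 * C)⁻¹ * (R * δ) ^ α) ≤ ENNReal.ofReal (#T * (C * δ ^ α)) :=
    calc _ ≤ μ (Set.Icc a (a + R * δ)) := hJ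
      _ ≤ ∑ m ∈ range R, μ (partitionPiece a δ m) :=
          (measure_mono (Icc_subset_biUnion_partitionPiece hδ.le hR)).trans
            (measure_biUnion_finset_le _ _)
      _ = ∑ m ∈ T, μ (partitionPiece a δ m) := (sum_filter_ne_zero _).symm
      _ ≤ #T • ENNReal.ofReal (C * δ ^ α) :=
          sum_le_card_nsmul _ _ _ fun m hm =>
            hμ.measure_partitionPiece_le hδ hδρ (mem_filter.1 hm).2
      _ = ENNReal.ofReal (#T * (C * δ ^ α)) := by
          rw [nsmul_eq_mul, ← ENNReal.ofReal_natCast, ← ENNReal.ofReal_mul (by positivity)]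
  rw [ENNReal.ofReal_le_ofReal_iff (by positivity), Real.mul_rpow (by positivity) hδ.le] at hsum
  have hcancel : (3 * C)⁻¹ * (R : ℝ) ^ α ≤ #T * C :=
    le_of_mul_le_mul_right (a := δ ^ α) (by linarith) hδα
  rw [inv_mul_le_iff₀ (by positivity)] at hcancel
  linarith

end Ahlfors

theorem stmt17_general (μ : Measure ℝ) (C α ρ₀ : ℝ) (hC : 1 < C)
    (hAhl : ∀ x ∈ msupp μ, ∀ ρ : ℝ, 0 < ρ → ρ ≤ ρ₀ →
      ENNReal.ofReal (C⁻¹ * ρ ^ α) ≤ μ (closedBall x ρ) ∧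
      μ (closedBall x ρ) ≤ ENNReal.ofReal (C * ρ ^ α))
    (R : ℕ) (hR : 2 ≤ R) (hRα : 21 * C ^ 2 ≤ (R : ℝ) ^ α)
    (a b : ℝ) (hab : a < b) (hbρ : 3 * (b - a) ≤ ρ₀)
    (hJ : ENNReal.ofReal ((3 * C)⁻¹ * (b - a) ^ α) ≤ μ (Set.Icc a b)) :
    ∃ S : Finset ℕ, S ⊆ Finset.range R ∧
      (∀ m ∈ S,
        ENNReal.ofReal ((3 * C)⁻¹ * ((b - a) / (R : ℝ)) ^ α) ≤
          μ (Set.Icc (a + (m : ℝ) * ((b - a) / (R : ℝ)))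
              (a + ((m : ℝ) + 1) * ((b - a) / (R : ℝ))))) ∧
      ((4 * C) ^ 2)⁻¹ * (R : ℝ) ^ α ≤ (S.card : ℝ) := by
  have hμ : IsAhlforsRegular μ C α ρ₀ := hAhl
  have hC0 : 0 < C := by linarith
  have hR0 : R ≠ 0 := by omega
  set δ := (b - a) / R
  have hRδ : R * δ = b - a := mul_div_cancel₀ _ (by positivity)
  have hδ : 0 < δ := div_pos (sub_pos.2 hab) (by positivity)
  have hδρ : δ ≤ ρ₀ := by
    have : (1 : ℝ) ≤ R := by exact_mod_cast hR0.bot_lt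
    nlinarith
  set S := {m ∈ range R | ENNReal.ofReal ((3 * C)⁻¹ * δ ^ α) ≤ μ (partitionPiece a δ m)}
  set T := {m ∈ range R | μ (partitionPiece a δ m) ≠ 0}
  have hT : (R : ℝ) ^ α ≤ 3 * C ^ 2 * #T := by
    refine hμ.rpow_le_card_partitionPiece_ne_zero hC0 hδ hδρ hR0 ?_
    rwa [hRδ, add_sub_cancel]
  have hTS : #T ≤ 3 * #S + 2 := by
    refine Finset.card_le_three_mul_card_add_two (filter_subset _ _) fun m hm hmR => ?_
    obtain ⟨k, hk, hkS⟩ := hμ.exists_heavy_partitionPiece hC0 hδ hδρ (mem_filter.1 hm).2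
    have hkR : k < R := by rw [mem_Icc] at hk; omega
    exact ⟨k, mem_filter.2 ⟨mem_range.2 hkR, hkS⟩, hk⟩
  refine ⟨S, filter_subset _ _, fun m hm => (mem_filter.1 hm).2, ?_⟩
  have hTS' : (#T : ℝ) ≤ 3 * #S + 2 := by exact_mod_cast hTS
  rw [inv_mul_le_iff₀ (by positivity)]
  nlinarith [mul_le_mul_of_nonneg_left hTS' (by positivity : (0 : ℝ) ≤ 3 * C ^ 2)]

/-- Let μ be (C,α)-Ahlfors regular on ℝ with radius ρ₀, R ≥ 2 with R^α ≥ 21C², and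
J = [a,b] with μ(J) ≥ (3C)⁻¹|J|^α and 3|J| ≤ ρ₀. Partitioning J into R equal closed
subintervals, at least (4C)⁻²R^α of them I satisfy μ(I) ≥ (3C)⁻¹|I|^α. -/
theorem stmt17 (μ : Measure ℝ) (C α ρ₀ : ℝ) (hC : 1 < C) (hα : 0 < α) (hρ₀ : 0 < ρ₀)
    (hAhl : ∀ x ∈ msupp μ, ∀ ρ : ℝ, 0 < ρ → ρ ≤ ρ₀ →
      ENNReal.ofReal (C⁻¹ * ρ ^ α) ≤ μ (closedBall x ρ) ∧
      μ (closedBall x ρ) ≤ ENNReal.ofReal (C * ρ ^ α))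
    (R : ℕ) (hR : 2 ≤ R) (hRα : 21 * C ^ 2 ≤ (R : ℝ) ^ α)
    (a b : ℝ) (hab : a < b) (hbρ : 3 * (b - a) ≤ ρ₀)
    (hJ : ENNReal.ofReal ((3 * C)⁻¹ * (b - a) ^ α) ≤ μ (Set.Icc a b)) :
    ∃ S : Finset ℕ, S ⊆ Finset.range R ∧
      (∀ m ∈ S,
        ENNReal.ofReal ((3 * C)⁻¹ * ((b - a) / (R : ℝ)) ^ α) ≤
          μ (Set.Icc (a + (m : ℝ) * ((b - a) / (R : ℝ)))
              (a + ((m : ℝ) + 1) * ((b - a) / (R : ℝ))))) ∧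
      ((4 * C) ^ 2)⁻¹ * (R : ℝ) ^ α ≤ (S.card : ℝ) :=
  stmt17_general μ C α ρ₀ hC hAhl R hR hRα a b hab hbρ hJ
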